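/- Let S be a type of states, let A_i and A₋ be finite nonempty types of actions, let T : S → A_i → A₋ → S be a transition function, let R : S → ℝ be a terminal reward, and let A', A'' : S → Set A_i be action-abstraction maps with A'(s) ⊆ A''(s) and A'(s) nonempty for every state s. Define the depth-n values V^n_X(s) for X ∈ {A', A'', full} by V⁰_X(s) = R(s) and V^{n+1}_X(s) = sup over mixed strategies σ on A_i supported in X(s), of the inf over mixed strategies τ on A₋, of ∑_{a} ∑_{b} σ(a) · τ(b) · V^n_X(T s a b), where 'full' denotes the un-abstracted map s ↦ A_i. Then for every n ∈ ℕ and every state s, V^n_{full}(s) ≥ V^n_{A''}(s) ≥ V^n_{A'}(s). -/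

import Mathlib

/-- Mixed strategies over a finite type `A` whose support is contained in `X`. -/
def stratsOn {A : Type*} [Fintype A] (X : Set A) : Set (A → ℝ) :=
  {σ | (∀ a, 0 ≤ σ a) ∧ (∑ a, σ a = 1) ∧ {a | 0 < σ a} ⊆ X}

/-- Depth-`n` optimal value of the abstracted simultaneous-move zero-sum game:
the maximizer's mixed strategies must be supported in `X s`, the minimizer may
use any mixed strategy. -/
noncomputable def absValue {S A B : Type*} [Fintype A] [Fintype B]
    (T : S → A → B → S) (R : S → ℝ) (X : S → Set A) : ℕ → S → ℝ
  | 0, s => R s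
  | n + 1, s =>
      sSup ((fun σ =>
        sInf ((fun τ => ∑ a, ∑ b, σ a * τ b * absValue T R X n (T s a b)) ''
          stratsOn (Set.univ : Set B))) '' stratsOn (X s))

/-!
Restricting the maximizer to a smaller support set can only shrink the set of mixed strategies
over which the supremum is taken, and raising every entry of the payoff matrix raises every
security level `inf_τ σᵀ C τ`. Hence one maximin step is monotone in both the support set and
the payoff matrix, and induction on the depth propagates `A' ⊆ A'' ⊆ univ` through the
recursion defining the values. Since `sSup`/`sInf` on `ℝ` are only meaningful on bounded
nonempty sets, each comparison rests on the bound `|σᵀ C τ| ≤ ∑ |C a b|` for mixed strategies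
and on the nonemptiness of the strategy sets involved.
-/

section MatrixGame

variable {A B : Type*} [Fintype A] [Fintype B]

lemma stratsOn_nonempty {X : Set A} (hX : X.Nonempty) : (stratsOn X).Nonempty := by
  classical
  obtain ⟨a, ha⟩ := hX
  refine ⟨Pi.single a 1, fun b => ?_, by simp, fun b hb => ?_⟩
  · by_cases h : b = a <;> simp [h]
  · by_cases h : b = a
    · exact h ▸ ha
    · simp [h] at hb

lemma stratsOn_mono {X Y : Set A} (hXY : X ⊆ Y) : stratsOn X ⊆ stratsOn Y :=
  fun _ ⟨hnonneg, hsum, hsupp⟩ => ⟨hnonneg, hsum, hsupp.trans hXY⟩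

lemma le_one_of_mem_stratsOn {X : Set A} {σ : A → ℝ} (hσ : σ ∈ stratsOn X) (a : A) :
    σ a ≤ 1 :=
  hσ.2.1 ▸ Finset.single_le_sum (fun i _ => hσ.1 i) (Finset.mem_univ a)

def payoff (C : A → B → ℝ) (σ : A → ℝ) (τ : B → ℝ) : ℝ :=
  ∑ a, ∑ b, σ a * τ b * C a b

lemma payoff_mono {C D : A → B → ℝ} (hCD : ∀ a b, C a b ≤ D a b) {σ : A → ℝ} {τ : B → ℝ}
    (hσ : ∀ a, 0 ≤ σ a) (hτ : ∀ b, 0 ≤ τ b) : payoff C σ τ ≤ payoff D σ τ :=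
  Finset.sum_le_sum fun a _ => Finset.sum_le_sum fun b _ =>
    mul_le_mul_of_nonneg_left (hCD a b) (mul_nonneg (hσ a) (hτ b))

lemma abs_payoff_le (C : A → B → ℝ) {X : Set A} {Y : Set B} {σ : A → ℝ} {τ : B → ℝ}
    (hσ : σ ∈ stratsOn X) (hτ : τ ∈ stratsOn Y) :
    |payoff C σ τ| ≤ ∑ a, ∑ b, |C a b| := by
  have hweight : ∀ a b, σ a * τ b ≤ 1 := fun a b =>
    mul_le_one₀ (le_one_of_mem_stratsOn hσ a) (hτ.1 b) (le_one_of_mem_stratsOn hτ b)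
  refine (Finset.abs_sum_le_sum_abs _ _).trans <| Finset.sum_le_sum fun a _ =>
    (Finset.abs_sum_le_sum_abs _ _).trans <| Finset.sum_le_sum fun b _ => ?_
  rw [abs_mul, abs_of_nonneg (mul_nonneg (hσ.1 a) (hτ.1 b))]
  exact mul_le_of_le_one_left (abs_nonneg _) (hweight a b)

noncomputable def securityLevel (C : A → B → ℝ) (σ : A → ℝ) : ℝ :=
  sInf (payoff C σ '' stratsOn (Set.univ : Set B))

noncomputable def maximin (X : Set A) (C : A → B → ℝ) : ℝ :=
  sSup (securityLevel C '' stratsOn X)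

lemma bddBelow_payoff_image (C : A → B → ℝ) {X : Set A} {σ : A → ℝ} (hσ : σ ∈ stratsOn X) :
    BddBelow (payoff C σ '' stratsOn (Set.univ : Set B)) :=
  ⟨-∑ a, ∑ b, |C a b|, by
    rintro _ ⟨τ, hτ, rfl⟩
    exact neg_le_of_abs_le (abs_payoff_le C hσ hτ)⟩

variable [Nonempty B]

lemma securityLevel_mono {C D : A → B → ℝ} (hCD : ∀ a b, C a b ≤ D a b) {X : Set A}
    {σ : A → ℝ} (hσ : σ ∈ stratsOn X) : securityLevel C σ ≤ securityLevel D σ := by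
  refine le_csInf ((stratsOn_nonempty Set.univ_nonempty).image _) ?_
  rintro _ ⟨τ, hτ, rfl⟩
  exact (csInf_le (bddBelow_payoff_image C hσ) ⟨τ, hτ, rfl⟩).trans (payoff_mono hCD hσ.1 hτ.1)

lemma bddAbove_securityLevel_image (C : A → B → ℝ) (X : Set A) :
    BddAbove (securityLevel C '' stratsOn X) := by
  obtain ⟨τ, hτ⟩ := stratsOn_nonempty (Set.univ_nonempty (α := B))
  refine ⟨∑ a, ∑ b, |C a b|, ?_⟩
  rintro _ ⟨σ, hσ, rfl⟩
  calc securityLevel C σ ≤ payoff C σ τ := csInf_le (bddBelow_payoff_image C hσ) ⟨τ, hτ, rfl⟩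
    _ ≤ ∑ a, ∑ b, |C a b| := le_of_abs_le (abs_payoff_le C hσ hτ)

lemma maximin_mono {X Y : Set A} (hXY : X ⊆ Y) (hX : X.Nonempty) {C D : A → B → ℝ}
    (hCD : ∀ a b, C a b ≤ D a b) : maximin X C ≤ maximin Y D := by
  refine csSup_le ((stratsOn_nonempty hX).image _) ?_
  rintro _ ⟨σ, hσ, rfl⟩
  have hσY := stratsOn_mono hXY hσ
  exact (securityLevel_mono hCD hσY).trans
    (le_csSup (bddAbove_securityLevel_image D Y) ⟨σ, hσY, rfl⟩)

end MatrixGame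

lemma absValue_succ {S A B : Type*} [Fintype A] [Fintype B] (T : S → A → B → S) (R : S → ℝ)
    (X : S → Set A) (n : ℕ) (s : S) :
    absValue T R X (n + 1) s = maximin (X s) fun a b => absValue T R X n (T s a b) :=
  rfl

theorem absValue_chain_general
    {S A B : Type*} [Fintype A] [Fintype B] [Nonempty B]
    (T : S → A → B → S) (R : S → ℝ) (A' A'' : S → Set A)
    (hsub : ∀ s, A' s ⊆ A'' s) (hne : ∀ s, (A' s).Nonempty) :
    ∀ (n : ℕ) (s : S),
      absValue T R A' n s ≤ absValue T R A'' n s ∧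
      absValue T R A'' n s ≤ absValue T R (fun _ => (Set.univ : Set A)) n s := by
  intro n
  induction n with
  | zero => exact fun _ => ⟨le_rfl, le_rfl⟩
  | succ n ih =>
    intro s
    simp only [absValue_succ]
    exact ⟨maximin_mono (hsub s) (hne s) fun a b => (ih (T s a b)).1,
      maximin_mono (Set.subset_univ _) ((hne s).mono (hsub s)) fun a b => (ih (T s a b)).2⟩

/-- The optimal value of the un-abstracted game is at least that of the
asymmetrically abstracted game, which is at least that of the uniformly
abstracted game. -/
theorem absValue_chain
    {S A B : Type*} [Fintype A] [Fintype B] [Nonempty A] [Nonempty B]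
    (T : S → A → B → S) (R : S → ℝ) (A' A'' : S → Set A)
    (hsub : ∀ s, A' s ⊆ A'' s) (hne : ∀ s, (A' s).Nonempty) :
    ∀ (n : ℕ) (s : S),
      absValue T R A' n s ≤ absValue T R A'' n s ∧
      absValue T R A'' n s ≤ absValue T R (fun _ => (Set.univ : Set A)) n s :=
  absValue_chain_general T R A' A'' hsub hne
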